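/- arXiv:1503.01419 — 3 statements merged into one kernel-verified Lean document; each statement's English description precedes it below -/
import Mathlib

section
/- Let p ≥ 5 be a prime and let f = y²z − x³ ∈ F_p[x,y,z]. Then I_1(f^{p−1}) = I_2(f^{p²−1}) = (x,y), the ideal generated by x and y. In particular, f has level two. -/
/-!
Write `q = p^e`. Over `𝔽_p` every polynomial is uniquely `∑_{0 ≤ a < q} x^a g_a^q`, and the map
`g ↦ g_a` sends `J^[q]` into `J` (it is `q`-th-root linear); hence `I_e(g)` contains every `g_a`.
In characteristic `p`, `f^(q-1) = ∑_{k<q} (y²z)^k (x³)^(q-1-k)`, and every term is divisible by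
`x^q` or `y^q`, so `I_e(f^(q-1)) ⊆ (x, y)`. Conversely, the components of `f^(q-1)` along
`x^((q-3)/2) y^(q-1) z^((q-1)/2)` and `y^(q-2) z^(q-1)` are exactly `x` and `y`, since the
`z`-exponent singles out one term (this needs `q` odd). The level is two because
`f^(p²-p) = (f^(p-1))^p ∈ (x,y)^[p²]`, while `f^0 = 1 ∉ (x,y)^[p]`.
-/

open MvPolynomial

/-- `J^[q]`: the ideal generated by the `q`-th powers of the elements of `J`. -/
def bracketPow {R : Type*} [CommRing R] (q : ℕ) (J : Ideal R) : Ideal R :=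
  Ideal.span ((fun a => a ^ q) '' (J : Set R))

/-- `I_e(g)` (for the prime `p`): the smallest ideal `J` with `g ∈ J^[p^e]`. -/
def rootIdeal {R : Type*} [CommRing R] (p e : ℕ) (g : R) : Ideal R :=
  sInf {J : Ideal R | g ∈ bracketPow (p ^ e) J}

/-- `f` has level `e`: `e` is the least integer `≥ 1` such that
`f^(p^e - p) ∈ (I_e(f^(p^e - 1)))^[p^e]`. -/
def HasLevel {R : Type*} [CommRing R] (p : ℕ) (f : R) (e : ℕ) : Prop :=
  IsLeast {e' : ℕ | 1 ≤ e' ∧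
    f ^ (p ^ e' - p) ∈ bracketPow (p ^ e') (rootIdeal p e' (f ^ (p ^ e' - 1)))} e

section BracketPow

variable {R : Type*} [CommRing R]

lemma bracketPow_le_self {q : ℕ} (hq : 0 < q) (J : Ideal R) : bracketPow q J ≤ J := by
  rw [bracketPow, Ideal.span_le]
  rintro _ ⟨x, hx, rfl⟩
  exact J.pow_mem_of_mem hx q hq

lemma span_image_pow_le_bracketPow (q : ℕ) (s : Set R) :
    Ideal.span ((· ^ q) '' s) ≤ bracketPow q (Ideal.span s) :=
  Ideal.span_mono (Set.image_mono Ideal.subset_span)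

lemma pow_mem_bracketPow_mul (p : ℕ) [ExpChar R p] {q : ℕ} {J : Ideal R} {g : R}
    (hg : g ∈ bracketPow q J) : g ^ p ∈ bracketPow (q * p) J := by
  have hmap : (bracketPow q J).map (frobenius R p) ≤ bracketPow (q * p) J := by
    rw [bracketPow, Ideal.map_span, Set.image_image]
    simp only [frobenius_def, ← pow_mul]
    exact le_rfl
  exact hmap (Ideal.mem_map_of_mem _ hg)

theorem hasLevel_two_of_rootIdeal_eq {p : ℕ} [ExpChar R p] {f : R}
    {J : Ideal R} (hJ : (1 : R) ∉ J) (hmem : f ^ (p - 1) ∈ bracketPow p J)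
    (h₁ : rootIdeal p 1 (f ^ (p - 1)) = J) (h₂ : rootIdeal p 2 (f ^ (p ^ 2 - 1)) = J) :
    HasLevel p f 2 := by
  refine ⟨⟨one_le_two, ?_⟩, fun e ⟨he, hfe⟩ => ?_⟩
  · rw [h₂, sq, ← Nat.sub_one_mul, pow_mul]
    exact pow_mem_bracketPow_mul p hmem
  · by_contra! hlt
    obtain rfl : e = 1 := by omega
    rw [pow_one, Nat.sub_self, pow_zero, h₁] at hfe
    exact hJ (bracketPow_le_self (expChar_pos R p) J hfe)

end BracketPow

lemma Finsupp.nsmul_add_injective {σ : Type*} {q : ℕ} (hq : 0 < q) (a : σ →₀ ℕ) :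
    Function.Injective fun m : σ →₀ ℕ => q • m + a :=
  (add_left_injective a).comp (smul_right_injective (σ →₀ ℕ) hq.ne')

namespace MvPolynomial

variable {σ R : Type*} [CommSemiring R]

/- The `g_a` of `g = ∑_{a < q} x^a g_a^q` over `𝔽_p`, `q = p^n`: its coefficient at `m` is that
of `g` at `q m + a`. -/
noncomputable def frobeniusComponent (q : ℕ) (hq : 0 < q) (a : σ →₀ ℕ) :
    MvPolynomial σ R →+ MvPolynomial σ R :=
  AddMonoidAlgebra.coeffAddEquiv.symm.toAddMonoidHom.comp <|
    (Finsupp.comapDomain.addMonoidHom (Finsupp.nsmul_add_injective hq a)).comp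
      AddMonoidAlgebra.coeffAddEquiv.toAddMonoidHom

variable {q : ℕ} {hq : 0 < q} {a : σ →₀ ℕ}

@[simp]
lemma coeff_frobeniusComponent (g : MvPolynomial σ R) (m : σ →₀ ℕ) :
    coeff m (frobeniusComponent q hq a g) = coeff (q • m + a) g := rfl

lemma frobeniusComponent_monomial_smul_add (m : σ →₀ ℕ) (c : R) :
    frobeniusComponent q hq a (monomial (q • m + a) c) = monomial m c := by
  classical
  ext m'
  simp only [coeff_frobeniusComponent, coeff_monomial, (Finsupp.nsmul_add_injective hq a).eq_iff]

lemma frobeniusComponent_monomial_eq_zero {d : σ →₀ ℕ} (i : σ) (hdi : d i < q) (hne : d i ≠ a i)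
    (c : R) : frobeniusComponent q hq a (monomial d c) = 0 := by
  classical
  ext m
  rw [coeff_frobeniusComponent, coeff_monomial, coeff_zero, if_neg]
  intro h
  have := DFunLike.congr_fun h i
  simp only [Finsupp.add_apply, Finsupp.smul_apply, smul_eq_mul] at this
  rcases Nat.eq_zero_or_pos (m i) with h0 | hpos
  · simp [h0] at this; omega
  · nlinarith

lemma frobeniusComponent_mul_monomial_smul (ha : ∀ i, a i < q) (g : MvPolynomial σ R)
    (s : σ →₀ ℕ) (c : R) :
    frobeniusComponent q hq a (g * monomial (q • s) c) =
      frobeniusComponent q hq a g * monomial s c := by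
  ext m
  rw [coeff_frobeniusComponent, coeff_mul_monomial', coeff_mul_monomial']
  have hle : q • s ≤ q • m + a ↔ s ≤ m := by
    simp only [Finsupp.le_def, Finsupp.add_apply, Finsupp.smul_apply, smul_eq_mul]
    refine forall_congr' fun i => ⟨fun h => ?_, fun h => le_add_right (Nat.mul_le_mul_left q h)⟩
    by_contra! hlt
    nlinarith [ha i]
  by_cases hsm : s ≤ m
  · have hsub : q • m + a - q • s = q • (m - s) + a := by
      ext i
      simp only [Finsupp.add_apply, Finsupp.smul_apply, Finsupp.tsub_apply, smul_eq_mul,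
        Nat.mul_sub]
      have := Nat.mul_le_mul_left q (hsm i)
      omega
    rw [if_pos (hle.2 hsm), if_pos hsm, hsub, coeff_frobeniusComponent]
  · rw [if_neg (mt hle.1 hsm), if_neg hsm]

lemma frobeniusComponent_mul_pow {p : ℕ} [Fact p.Prime] {n : ℕ} {hq : 0 < p ^ n}
    (ha : ∀ i, a i < p ^ n) (g u : MvPolynomial σ (ZMod p)) :
    frobeniusComponent (p ^ n) hq a (g * u ^ p ^ n) = frobeniusComponent (p ^ n) hq a g * u := by
  induction u using MvPolynomial.induction_on' with
  | monomial s c =>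
    rw [monomial_pow, ZMod.pow_card_pow, frobeniusComponent_mul_monomial_smul ha]
  | add u v hu hv =>
    rw [add_pow_char_pow, mul_add, map_add, hu, hv, mul_add]

lemma frobeniusComponent_mem_of_mem_bracketPow {p : ℕ} [Fact p.Prime] {n : ℕ} {hq : 0 < p ^ n}
    (ha : ∀ i, a i < p ^ n) {J : Ideal (MvPolynomial σ (ZMod p))} {g : MvPolynomial σ (ZMod p)}
    (hg : g ∈ bracketPow (p ^ n) J) : frobeniusComponent (p ^ n) hq a g ∈ J := by
  obtain ⟨k, r, j, rfl⟩ := Submodule.mem_span_set'.1 hg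
  rw [map_sum]
  refine J.sum_mem fun i _ => ?_
  obtain ⟨_, x, hx, rfl⟩ := j i
  rw [smul_eq_mul, frobeniusComponent_mul_pow ha]
  exact J.mul_mem_left _ hx

end MvPolynomial

noncomputable def expTriple (a b c : ℕ) : Fin 3 →₀ ℕ :=
  Finsupp.single 0 a + Finsupp.single 1 b + Finsupp.single 2 c

@[simp] lemma expTriple_apply_zero (a b c : ℕ) : expTriple a b c 0 = a := by simp [expTriple]
@[simp] lemma expTriple_apply_one (a b c : ℕ) : expTriple a b c 1 = b := by simp [expTriple]
@[simp] lemma expTriple_apply_two (a b c : ℕ) : expTriple a b c 2 = c := by simp [expTriple]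

lemma expTriple_lt_iff {a b c q : ℕ} : (∀ i, expTriple a b c i < q) ↔ a < q ∧ b < q ∧ c < q := by
  simp [Fin.forall_fin_succ]

section Cusp

variable {K : Type*} [CommRing K]

variable (K) in
noncomputable def cuspPowSum (q : ℕ) : MvPolynomial (Fin 3) K :=
  ∑ k ∈ Finset.range q, monomial (expTriple (3 * (q - 1 - k)) (2 * k) k) 1

lemma cusp_ne_zero [Nontrivial K] : (X 1 ^ 2 * X 2 - X 0 ^ 3 : MvPolynomial (Fin 3) K) ≠ 0 := by
  intro h
  simpa using congrArg (eval ![1, 0, 0]) h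

-- In characteristic `p`, `(A - B) * ∑ A^k B^(q-1-k) = A^q - B^q = (A - B)^q`; cancel `A - B`.
lemma cusp_pow_sub_one_eq [IsDomain K] (p : ℕ) [Fact p.Prime] [CharP K p] (n : ℕ) :
    (X 1 ^ 2 * X 2 - X 0 ^ 3 : MvPolynomial (Fin 3) K) ^ (p ^ n - 1) = cuspPowSum K (p ^ n) := by
  have hq : 0 < p ^ n := pow_pos (Fact.out : p.Prime).pos n
  have hterm : ∀ k ∈ Finset.range (p ^ n),
      (X 1 ^ 2 * X 2 : MvPolynomial (Fin 3) K) ^ k * (X 0 ^ 3) ^ (p ^ n - 1 - k)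
        = monomial (expTriple (3 * (p ^ n - 1 - k)) (2 * k) k) 1 := fun k _ => by
    rw [mul_pow, ← pow_mul, ← pow_mul, X_pow_eq_monomial, X_pow_eq_monomial, X_pow_eq_monomial,
      monomial_mul, monomial_mul, one_mul, one_mul]
    refine congrArg (monomial · 1) (Finsupp.ext fun i => ?_)
    fin_cases i <;> simp [mul_comm]
  refine mul_right_cancel₀ (cusp_ne_zero (K := K)) ?_
  rw [← pow_succ, Nat.sub_add_cancel hq, sub_pow_char_pow, ← geom_sum₂_mul, cuspPowSum,
    Finset.sum_congr rfl hterm]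

lemma cuspPowSum_mem_bracketPow {q : ℕ} (hq : 2 ≤ q) :
    cuspPowSum K q ∈ bracketPow q (Ideal.span {X 0, X 1}) := by
  refine span_image_pow_le_bracketPow q _ ?_
  rw [Set.image_pair]
  refine Ideal.sum_mem _ fun k hk => ?_
  have hk := Finset.mem_range.1 hk
  obtain ⟨i, hi, hiq⟩ : ∃ i, (X i ^ q : MvPolynomial (Fin 3) K) ∈ Ideal.span {X 0 ^ q, X 1 ^ q} ∧
      q ≤ expTriple (3 * (q - 1 - k)) (2 * k) k i := by
    by_cases h : q ≤ 3 * (q - 1 - k)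
    · exact ⟨0, Ideal.subset_span (by simp), by simpa using h⟩
    · exact ⟨1, Ideal.subset_span (by simp), by simp; omega⟩
  refine Ideal.mem_of_dvd _ ?_ hi
  rw [X_pow_eq_monomial]
  exact monomial_dvd_monomial.2 ⟨Or.inr (Finsupp.single_le_iff.2 hiq), dvd_rfl⟩

lemma cusp_pow_mem_bracketPow [IsDomain K] (p : ℕ) [Fact p.Prime] [CharP K p] {n : ℕ}
    (hn : n ≠ 0) : (X 1 ^ 2 * X 2 - X 0 ^ 3 : MvPolynomial (Fin 3) K) ^ (p ^ n - 1) ∈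
      bracketPow (p ^ n) (Ideal.span {X 0, X 1}) := by
  rw [cusp_pow_sub_one_eq p n]
  exact cuspPowSum_mem_bracketPow ((Fact.out : p.Prime).two_le.trans (Nat.le_self_pow hn p))

lemma frobeniusComponent_cuspPowSum {q : ℕ} (hq : 0 < q) {a m : Fin 3 →₀ ℕ} {k : ℕ} (hk : k < q)
    (ha : a 2 = k) (hm : q • m + a = expTriple (3 * (q - 1 - k)) (2 * k) k) :
    frobeniusComponent q hq a (cuspPowSum K q) = monomial m 1 := by
  rw [cuspPowSum, map_sum, Finset.sum_eq_single_of_mem k (Finset.mem_range.2 hk), ← hm,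
    frobeniusComponent_monomial_smul_add]
  -- the `z`-exponent `j < q` of the `j`-th term must agree with `a 2 = k`
  intro j hj hne
  exact frobeniusComponent_monomial_eq_zero 2 (by simpa using hj) (by simpa [ha] using hne) 1

end Cusp

lemma monomial_mem_of_cuspPowSum_mem_bracketPow {p : ℕ} [Fact p.Prime] {n : ℕ}
    {J : Ideal (MvPolynomial (Fin 3) (ZMod p))}
    (hJ : cuspPowSum (ZMod p) (p ^ n) ∈ bracketPow (p ^ n) J)
    {b₀ b₁ k : ℕ} (hb₀ : b₀ < p ^ n) (hb₁ : b₁ < p ^ n) (hk : k < p ^ n) {m : Fin 3 →₀ ℕ}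
    (hm : p ^ n • m + expTriple b₀ b₁ k = expTriple (3 * (p ^ n - 1 - k)) (2 * k) k) :
    monomial m 1 ∈ J := by
  have hq : 0 < p ^ n := by omega
  have hmem := frobeniusComponent_mem_of_mem_bracketPow (hq := hq)
    (expTriple_lt_iff.2 ⟨hb₀, hb₁, hk⟩) hJ
  rwa [frobeniusComponent_cuspPowSum hq hk (expTriple_apply_two _ _ _) hm] at hmem

theorem rootIdeal_cusp_pow {p : ℕ} [Fact p.Prime] (hp : p ≠ 2) {n : ℕ} (hn : n ≠ 0) :
    rootIdeal p n ((X 1 ^ 2 * X 2 - X 0 ^ 3 : MvPolynomial (Fin 3) (ZMod p)) ^ (p ^ n - 1)) =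
      Ideal.span {X 0, X 1} := by
  have hq3 : 3 ≤ p ^ n :=
    ((Fact.out : p.Prime).two_le.lt_of_ne' hp).trans_le (Nat.le_self_pow hn p)
  have hodd : p ^ n % 2 = 1 := Nat.odd_iff.1 ((Fact.out : p.Prime).odd_of_ne_two hp).pow
  refine le_antisymm (sInf_le (cusp_pow_mem_bracketPow p hn)) (le_sInf fun J hJ => ?_)
  rw [cusp_pow_sub_one_eq p n] at hJ
  rw [Ideal.span_le, Set.pair_subset_iff]
  constructor
  · exact monomial_mem_of_cuspPowSum_mem_bracketPow hJ (b₀ := (p ^ n - 3) / 2) (b₁ := p ^ n - 1)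
      (k := (p ^ n - 1) / 2) (by omega) (by omega) (by omega)
      (Finsupp.ext fun i => by fin_cases i <;> simp <;> omega)
  · exact monomial_mem_of_cuspPowSum_mem_bracketPow hJ (b₀ := 0) (b₁ := p ^ n - 2)
      (k := p ^ n - 1) (by omega) (by omega) (by omega)
      (Finsupp.ext fun i => by fin_cases i <;> simp; omega)

lemma one_notMem_span_X_pair {σ K : Type*} [CommRing K] [Nontrivial K] (i j : σ) :
    (1 : MvPolynomial σ K) ∉ Ideal.span {X i, X j} := by
  intro h
  obtain ⟨a, b, hab⟩ := Ideal.mem_span_pair.1 h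
  simpa using congrArg constantCoeff hab

/-- Let `p ≥ 5` be prime and `f = y²z - x³ ∈ 𝔽_p[x,y,z]`. Then
`I_1(f^(p-1)) = I_2(f^(p²-1)) = (x, y)`; in particular `f` has level two. -/
theorem stmt_4 (p : ℕ) [Fact p.Prime] (hp5 : 5 ≤ p)
    (f : MvPolynomial (Fin 3) (ZMod p))
    (hf : f = (X 1) ^ 2 * X 2 - (X 0) ^ 3) :
    rootIdeal p 1 (f ^ (p - 1)) = Ideal.span {X 0, X 1} ∧
    rootIdeal p 2 (f ^ (p ^ 2 - 1)) = Ideal.span {X 0, X 1} ∧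
    HasLevel p f 2 := by
  subst hf
  have hp2 : p ≠ 2 := by omega
  have hI₁ := rootIdeal_cusp_pow hp2 one_ne_zero
  rw [pow_one] at hI₁
  have hI₂ := rootIdeal_cusp_pow hp2 two_ne_zero
  have hmem := cusp_pow_mem_bracketPow (K := ZMod p) p one_ne_zero
  rw [pow_one] at hmem
  exact ⟨hI₁, hI₂, hasLevel_two_of_rootIdeal_eq (one_notMem_span_X_pair 0 1) hmem hI₁ hI₂⟩
end

section
/- Let k be a perfect field of prime characteristic p, let n ≤ d, and let f = ℓ₁^{a₁}⋯ℓ_n^{a_n} ∈ k[x₁,…,x_d] where ℓ₁,…,ℓ_n are linear forms that are linearly independent over k and every aᵢ > 0. Let a = max{a₁,…,a_n} and e = ⌈log_p(a)⌉ + 1. Then the level of f equals e, and I_e(f^{p^e−1}) is the principal ideal generated by ℓ₁^{a₁−1}⋯ℓ_n^{a_n−1}. -/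
open MvPolynomial

/-!
A linear change of coordinates turns `ℓ₁, …, ℓ_n` into variables, and `I_e` commutes with ring
isomorphisms, so `f` may be taken to be a monomial `x^c`. With `q = p^e`, `I_e(x^c) = (x^⌊c/q⌋)`:
one inclusion comes from `x^c = (x^⌊c/q⌋)^q · x^(c mod q)`; for the other, the `q⁻¹`-linear
operator sending `x^(qν + (c mod q))` to `x^ν` and killing all other monomials maps `J^[q]` into
`J` and `x^c` to `x^⌊c/q⌋`. The condition `f^(q-p) ∈ I_e(f^(q-1))^[q]` thus becomes
`q ⌊(q-1)aᵢ/q⌋ ≤ (q-p)aᵢ` for all `i`, which holds exactly when `p aᵢ ≤ q`, i.e. when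
`e > ⌈log_p a⌉`.
-/

section BracketPow

variable {R S : Type*} [CommRing R] [CommRing S]

lemma map_bracketPow_le (φ : R →+* S) (q : ℕ) (J : Ideal R) :
    (bracketPow q J).map φ ≤ bracketPow q (J.map φ) := by
  rw [bracketPow, Ideal.map_span, Ideal.span_le]
  rintro _ ⟨_, ⟨x, hx, rfl⟩, rfl⟩
  exact Ideal.subset_span ⟨φ x, Ideal.mem_map_of_mem φ hx, (map_pow φ x q).symm⟩

lemma bracketPow_span_singleton (q : ℕ) (g : R) :
    bracketPow q (Ideal.span {g}) = Ideal.span {g ^ q} := by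
  apply le_antisymm
  · rw [bracketPow, Ideal.span_le]
    rintro _ ⟨x, hx, rfl⟩
    obtain ⟨r, rfl⟩ := Ideal.mem_span_singleton'.mp hx
    exact Ideal.mem_span_singleton.mpr ⟨r ^ q, by simp only [mul_pow, mul_comm]⟩
  · rw [Ideal.span_le, Set.singleton_subset_iff]
    exact Ideal.subset_span ⟨g, Ideal.mem_span_singleton_self g, rfl⟩

lemma rootIdeal_eq_of_isLeast {p e : ℕ} {g : R} {I : Ideal R}
    (h : IsLeast {J : Ideal R | g ∈ bracketPow (p ^ e) J} I) : rootIdeal p e g = I :=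
  h.csInf_eq

lemma IsLeast.map_ringEquiv {q : ℕ} {g : R} {I : Ideal R} (σ : R ≃+* S)
    (h : IsLeast {J : Ideal R | g ∈ bracketPow q J} I) :
    IsLeast {J : Ideal S | σ g ∈ bracketPow q J} (I.map (σ : R →+* S)) := by
  refine ⟨map_bracketPow_le (σ : R →+* S) q I (Ideal.mem_map_of_mem _ h.1), fun J hJ => ?_⟩
  have hg : g ∈ bracketPow q (J.map (σ.symm : S →+* R)) := by
    simpa only [RingEquiv.coe_toRingHom, RingEquiv.symm_apply_apply] using
      map_bracketPow_le (σ.symm : S →+* R) q J (Ideal.mem_map_of_mem _ hJ)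
  calc I.map (σ : R →+* S) ≤ (J.map (σ.symm : S →+* R)).map (σ : R →+* S) :=
        Ideal.map_mono (h.2 hg)
    _ = J := by simpa only [RingEquiv.symm_symm] using Ideal.map_of_equiv (I := J) σ.symm

end BracketPow

namespace Finsupp

lemma smul_add_floorDiv {σ : Type*} {q : ℕ} (hq : 0 < q) (ν μ : σ →₀ ℕ) :
    (q • ν + μ) ⌊/⌋ q = ν + μ ⌊/⌋ q := by
  ext i
  simp [Nat.mul_add_div hq]

end Finsupp

section Cartier

variable {k σ : Type*} [CommRing k] (p : ℕ) [ExpChar k p] [PerfectRing k p] (e : ℕ)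

open Classical in
/-- `s x^μ ↦ s^{1/p^e} x^ν` if `μ = p^e ν + ρ`, and `s x^μ ↦ 0` otherwise. -/
noncomputable def cartier (ρ : σ →₀ ℕ) : MvPolynomial σ k →+ MvPolynomial σ k :=
  (Finsupp.liftAddHom fun μ =>
    if p ^ e • (μ ⌊/⌋ p ^ e) + ρ = μ then
      (monomial (μ ⌊/⌋ p ^ e)).toAddMonoidHom.comp
        (iterateFrobeniusEquiv k p e).symm.toAddMonoidHom
    else 0).comp AddMonoidAlgebra.coeffAddEquiv.toAddMonoidHom

variable {p e}

open Classical in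
lemma cartier_monomial (ρ μ : σ →₀ ℕ) (s : k) :
    cartier p e ρ (monomial μ s) = if p ^ e • (μ ⌊/⌋ p ^ e) + ρ = μ then
      monomial (μ ⌊/⌋ p ^ e) ((iterateFrobeniusEquiv k p e).symm s) else 0 := by
  rw [cartier, AddMonoidHom.comp_apply, ← single_eq_monomial]
  simp only [AddEquiv.toAddMonoidHom_eq_coe, AddMonoidHom.coe_coe,
    AddMonoidAlgebra.coeffAddEquiv_apply, AddMonoidAlgebra.coeff_single,
    Finsupp.liftAddHom_apply_single]
  split_ifs <;> rfl

lemma cartier_monomial_pow_mul (ρ ν μ : σ →₀ ℕ) (t s : k) :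
    cartier p e ρ (monomial ν t ^ p ^ e * monomial μ s) =
      monomial ν t * cartier p e ρ (monomial μ s) := by
  have hdiv := Finsupp.smul_add_floorDiv (expChar_pow_pos k p e) ν μ
  have hroot : (iterateFrobeniusEquiv k p e).symm (t ^ p ^ e) = t :=
    (iterateFrobeniusEquiv k p e).symm_apply_apply t
  rw [monomial_pow, monomial_mul, cartier_monomial, cartier_monomial, hdiv]
  by_cases h : p ^ e • (μ ⌊/⌋ p ^ e) + ρ = μ
  · rw [if_pos (by rw [smul_add, add_assoc, h]), if_pos h, map_mul, hroot, monomial_mul]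
  · rw [if_neg (by rwa [smul_add, add_assoc, add_right_inj]), if_neg h, mul_zero]

lemma cartier_pow_mul (ρ : σ →₀ ℕ) (u w : MvPolynomial σ k) :
    cartier p e ρ (u ^ p ^ e * w) = u * cartier p e ρ w := by
  induction w using MvPolynomial.induction_on' with
  | monomial μ s =>
    induction u using MvPolynomial.induction_on' with
    | monomial ν t => exact cartier_monomial_pow_mul ρ ν μ t s
    | add u v hu hv => rw [add_pow_expChar_pow, add_mul, map_add, hu, hv, add_mul]
  | add w w' hw hw' => rw [mul_add, map_add, hw, hw', map_add, mul_add]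

lemma cartier_mem_of_mem_bracketPow (ρ : σ →₀ ℕ) {J : Ideal (MvPolynomial σ k)}
    {x : MvPolynomial σ k} (hx : x ∈ bracketPow (p ^ e) J) : cartier p e ρ x ∈ J := by
  suffices ∀ u, cartier p e ρ (u * x) ∈ J by simpa using this 1
  induction hx using Submodule.span_induction with
  | mem _ h =>
    obtain ⟨h, hh, rfl⟩ := h
    intro u
    rw [mul_comm, cartier_pow_mul]
    exact J.mul_mem_right _ hh
  | zero => simp
  | add x y _ _ hx hy => intro u; rw [mul_add, map_add]; exact J.add_mem (hx u) (hy u)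
  | smul r x _ hx => intro u; rw [smul_eq_mul, ← mul_assoc]; exact hx (u * r)

lemma cartier_monomial_self {ρ : σ →₀ ℕ} (hρ : ρ ⌊/⌋ p ^ e = 0) :
    cartier p e ρ (monomial ρ (1 : k)) = 1 := by
  rw [cartier_monomial, hρ, smul_zero, zero_add, if_pos rfl, map_one, monomial_zero', C_1]

lemma isLeast_monomial (c : σ →₀ ℕ) :
    IsLeast {J | monomial c (1 : k) ∈ bracketPow (p ^ e) J}
      (Ideal.span {monomial (c ⌊/⌋ p ^ e) 1}) := by
  have hq : 0 < p ^ e := expChar_pow_pos k p e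
  set ρ := c - p ^ e • (c ⌊/⌋ p ^ e)
  have hρ : ρ ⌊/⌋ p ^ e = 0 := by
    ext i
    simp [ρ, ← Nat.mod_eq_sub_mul_div]
  have hc : monomial c (1 : k) = monomial (c ⌊/⌋ p ^ e) 1 ^ p ^ e * monomial ρ 1 := by
    rw [monomial_pow, monomial_mul, one_pow, one_mul, add_tsub_cancel_of_le (smul_floorDiv_le hq)]
  refine ⟨?_, fun J hJ => ?_⟩
  · rw [Set.mem_ofPred_eq, bracketPow_span_singleton, hc]
    exact Ideal.mul_mem_right _ _ (Ideal.mem_span_singleton_self _)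
  · have h := cartier_mem_of_mem_bracketPow ρ hJ
    rw [hc, cartier_pow_mul, cartier_monomial_self hρ, mul_one] at h
    rwa [Ideal.span_le, Set.singleton_subset_iff]

end Cartier

lemma Module.Basis.sumExtend_apply_inl {K V ι : Type*} [Field K] [AddCommGroup V] [Module K V]
    {v : ι → V} (hs : LinearIndependent K v) (i : ι) :
    Module.Basis.sumExtend hs (Sum.inl i) = v i := by
  simp only [Module.Basis.sumExtend, Module.Basis.reindex_apply, Module.Basis.coe_extend]
  rfl

namespace MvPolynomial

variable {R σ : Type*} [CommSemiring R] [Fintype σ]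

lemma IsHomogeneous.sum_coeff_single_smul_X {g : MvPolynomial σ R} (hg : g.IsHomogeneous 1) :
    ∑ t, coeff (Finsupp.single t 1) g • X t = g := by
  classical
  ext μ
  simp only [coeff_sum, coeff_smul, coeff_X, smul_eq_mul, mul_ite, mul_one, mul_zero]
  by_cases hμ : ∃ t, Finsupp.single t 1 = μ
  · obtain ⟨t, rfl⟩ := hμ
    rw [Finset.sum_eq_single t
      (fun s _ hs => if_neg fun h => hs (Finsupp.single_left_injective one_ne_zero h)) (by simp),
      if_pos rfl]
  · rw [Finset.sum_eq_zero fun t _ => if_neg fun h => hμ ⟨t, h⟩]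
    by_contra hne
    have hdeg : μ ∈ {d : σ →₀ ℕ | d.degree = 1} := by
      rw [Set.mem_ofPred_eq, Finsupp.degree_eq_weight_one]
      exact hg (Ne.symm hne)
    rw [← Finsupp.range_single_one] at hdeg
    exact hμ hdeg

lemma monomial_equivFunOnFinite_symm (c : σ → ℕ) :
    monomial (Finsupp.equivFunOnFinite.symm c) (1 : R) = ∏ j, X j ^ c j := by
  rw [monomial_eq, C_1, one_mul, Finsupp.prod_fintype _ _ fun _ => pow_zero _]
  rfl

lemma monomial_equivFunOnFinite_symm_sumElim_zero {κ : Type*} [Fintype κ] (b : σ → ℕ) :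
    monomial (Finsupp.equivFunOnFinite.symm (Sum.elim b (0 : κ → ℕ))) (1 : R) =
      ∏ i, X (Sum.inl i) ^ b i := by
  simp [monomial_equivFunOnFinite_symm, Fintype.prod_sum_type]

end MvPolynomial

lemma SymmetricAlgebra.equivMvPolynomial_basisFun_ι {k τ : Type*} [Field k] [Fintype τ]
    (v : τ → k) :
    equivMvPolynomial (Pi.basisFun k τ) (ι k (τ → k) v) = ∑ t, v t • X t := by
  conv_lhs => rw [← (Pi.basisFun k τ).sum_repr v]
  simp only [map_sum, map_smul, equivMvPolynomial_ι_apply, Pi.basisFun_repr]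

section LinearForms

variable {k τ ι : Type*} [Field k] [Fintype τ] {ℓ : ι → MvPolynomial τ k}

theorem exists_algEquiv_X_inl_eq (hℓ : ∀ i, (ℓ i).IsHomogeneous 1)
    (hind : LinearIndependent k ℓ) :
    ∃ (m : ℕ) (φ : MvPolynomial (ι ⊕ Fin m) k ≃ₐ[k] MvPolynomial τ k),
      ∀ i, φ (X (Sum.inl i)) = ℓ i := by
  -- `E` identifies `Sym(k^τ)` with `k[X_t]`, a vector `v` going to the linear form `∑ v t • X t`;
  -- a basis of `k^τ` extending the coefficient vectors of the `ℓ i` then gives `φ`.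
  let E := SymmetricAlgebra.equivMvPolynomial (Pi.basisFun k τ)
  let v : ι → τ → k := fun i t => coeff (Finsupp.single t 1) (ℓ i)
  have hv : ∀ i, E (SymmetricAlgebra.ι k _ (v i)) = ℓ i := fun i => by
    rw [SymmetricAlgebra.equivMvPolynomial_basisFun_ι]
    exact (hℓ i).sum_coeff_single_smul_X
  have hli : LinearIndependent k v := by
    have h : ⇑(E.toLinearMap ∘ₗ SymmetricAlgebra.ι k (τ → k)) ∘ v = ℓ := funext hv
    exact .of_comp _ (h ▸ hind)
  let b := Module.Basis.sumExtend hli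
  have := Module.Finite.finite_basis b
  have := Finite.of_injective _
    (Sum.inr_injective (α := ι) (β := Module.Basis.sumExtendIndex hli))
  let b' := b.reindex ((Equiv.refl ι).sumCongr (Finite.equivFin _))
  refine ⟨_, (SymmetricAlgebra.equivMvPolynomial b').symm.trans E, fun i => ?_⟩
  rw [AlgEquiv.trans_apply, SymmetricAlgebra.equivMvPolynomial_symm_X, Module.Basis.reindex_apply]
  simp only [Equiv.sumCongr_symm, Equiv.sumCongr_apply, Sum.map_inl, Equiv.refl_symm,
    Equiv.refl_apply]
  rw [Module.Basis.sumExtend_apply_inl, hv]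

variable [Fintype ι]

theorem exists_algEquiv_monomial_eq_prod_pow (hℓ : ∀ i, (ℓ i).IsHomogeneous 1)
    (hind : LinearIndependent k ℓ) :
    ∃ (m : ℕ) (φ : MvPolynomial (ι ⊕ Fin m) k ≃ₐ[k] MvPolynomial τ k),
      ∀ b : ι → ℕ, φ (monomial (Finsupp.equivFunOnFinite.symm (Sum.elim b 0)) 1) =
        ∏ i, ℓ i ^ b i := by
  obtain ⟨m, φ, hφ⟩ := exists_algEquiv_X_inl_eq hℓ hind
  exact ⟨m, φ, fun b => by simp [monomial_equivFunOnFinite_symm_sumElim_zero, hφ]⟩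

theorem rootIdeal_prod_pow_of_linearIndependent {p : ℕ} [ExpChar k p] [PerfectRing k p] (e : ℕ)
    (hℓ : ∀ i, (ℓ i).IsHomogeneous 1) (hind : LinearIndependent k ℓ) (b : ι → ℕ) :
    rootIdeal p e (∏ i, ℓ i ^ b i) = Ideal.span {∏ i, ℓ i ^ (b i / p ^ e)} := by
  obtain ⟨m, φ, hφ⟩ := exists_algEquiv_monomial_eq_prod_pow hℓ hind
  have hdiv : Finsupp.equivFunOnFinite.symm (Sum.elim b (0 : Fin m → ℕ)) ⌊/⌋ p ^ e =
      Finsupp.equivFunOnFinite.symm (Sum.elim (fun i => b i / p ^ e) 0) := by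
    ext (i | j) <;> simp
  have := (isLeast_monomial (k := k) (p := p) (e := e)
    (Finsupp.equivFunOnFinite.symm (Sum.elim b (0 : Fin m → ℕ)))).map_ringEquiv φ.toRingEquiv
  rw [hdiv, Ideal.map_span, Set.image_singleton, RingEquiv.coe_toRingHom, AlgEquiv.coe_ringEquiv,
    hφ, hφ] at this
  exact rootIdeal_eq_of_isLeast this

theorem prod_pow_dvd_prod_pow_iff_of_linearIndependent
    (hℓ : ∀ i, (ℓ i).IsHomogeneous 1) (hind : LinearIndependent k ℓ) {b c : ι → ℕ} :
    ∏ i, ℓ i ^ b i ∣ ∏ i, ℓ i ^ c i ↔ b ≤ c := by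
  obtain ⟨m, φ, hφ⟩ := exists_algEquiv_monomial_eq_prod_pow hℓ hind
  rw [← hφ, ← hφ, map_dvd_iff, monomial_dvd_monomial]
  simp [Finsupp.le_def, Sum.forall, Pi.le_def]

end LinearForms

namespace Nat

lemma sub_one_mul_div_self_of_le {q a : ℕ} (h : a ≤ q) : (q - 1) * a / q = a - 1 := by
  obtain _ | b := a
  · simp
  obtain _ | r := q
  · omega
  refine Nat.div_eq_of_lt_le ?_ ?_ <;> simp only [Nat.add_sub_cancel] <;> nlinarith

lemma mul_div_le_sub_mul_iff {p q a : ℕ} (hp : 2 ≤ p) (hpq : p ≤ q) :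
    q * ((q - 1) * a / q) ≤ (q - p) * a ↔ p * a ≤ q := by
  rcases le_or_gt a q with haq | hqa
  · rw [sub_one_mul_div_self_of_le haq, Nat.mul_sub_one, Nat.sub_mul]
    rcases Nat.eq_zero_or_pos a with rfl | ha
    · simp
    have := Nat.le_mul_of_pos_right q ha
    have := Nat.mul_le_mul_right a hpq
    omega
  · have hdiv := Nat.div_add_mod ((q - 1) * a) q
    have hmod := Nat.mod_lt ((q - 1) * a) (by omega : 0 < q)
    have hsplit : (q - 1) * a = (q - p) * a + (p - 1) * a := by
      rw [← Nat.add_mul]; congr 1; omega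
    have : a ≤ (p - 1) * a := Nat.le_mul_of_pos_left a (by omega)
    have : 2 * a ≤ p * a := Nat.mul_le_mul_right a hp
    constructor <;> intro h <;> omega

lemma clog_sup_lt_iff {ι : Type*} (s : Finset ι) (a : ι → ℕ) {p E : ℕ} (hp : 1 < p)
    (hE : 1 ≤ E) :
    Nat.clog p (s.sup a) < E ↔ ∀ i ∈ s, p * a i ≤ p ^ E := by
  obtain ⟨E, rfl⟩ : ∃ E', E = E' + 1 := ⟨E - 1, by omega⟩
  simp only [Nat.lt_succ_iff, Nat.clog_le_iff_le_pow hp, Finset.sup_le_iff, pow_succ',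
    Nat.mul_le_mul_left_iff (by omega : 0 < p)]

end Nat

theorem stmt_9_general (p : ℕ) [Fact p.Prime] (k : Type*) [Field k] [CharP k p] [PerfectField k]
    (d n : ℕ)
    (ℓ : Fin n → MvPolynomial (Fin d) k)
    (hℓ : ∀ i, (ℓ i).IsHomogeneous 1)
    (hind : LinearIndependent k ℓ)
    (a : Fin n → ℕ)
    (e : ℕ) (he : e = Nat.clog p (Finset.univ.sup a) + 1)
    (f : MvPolynomial (Fin d) k)
    (hf : f = ∏ i, ℓ i ^ a i) :
    HasLevel p f e ∧
    rootIdeal p e (f ^ (p ^ e - 1)) = Ideal.span {∏ i, ℓ i ^ (a i - 1)} := by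
  have hp := (Fact.out : p.Prime).two_le
  have hroot (E : ℕ) : rootIdeal p E (f ^ (p ^ E - 1)) =
      Ideal.span {∏ i, ℓ i ^ ((p ^ E - 1) * a i / p ^ E)} := by
    simp_rw [hf, ← Finset.prod_pow, ← pow_mul']
    exact rootIdeal_prod_pow_of_linearIndependent E hℓ hind _
  have hlevel (E : ℕ) (hE : 1 ≤ E) :
      f ^ (p ^ E - p) ∈ bracketPow (p ^ E) (rootIdeal p E (f ^ (p ^ E - 1))) ↔ e ≤ E := by
    rw [hroot, bracketPow_span_singleton, Ideal.mem_span_singleton, hf]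
    simp_rw [← Finset.prod_pow, ← pow_mul']
    rw [prod_pow_dvd_prod_pow_iff_of_linearIndependent hℓ hind, he, Nat.add_one_le_iff,
      Nat.clog_sup_lt_iff _ _ (by omega) hE]
    simp only [Pi.le_def, Finset.mem_univ, true_implies]
    exact forall_congr' fun i => Nat.mul_div_le_sub_mul_iff hp (Nat.le_self_pow (by omega) p)
  have he1 : 1 ≤ e := by omega
  have hpa : ∀ i, p * a i ≤ p ^ e := by
    simpa using (Nat.clog_sup_lt_iff Finset.univ a (by omega) he1).mp (by omega)
  have hdiv (i : Fin n) : (p ^ e - 1) * a i / p ^ e = a i - 1 :=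
    Nat.sub_one_mul_div_self_of_le ((Nat.le_mul_of_pos_left _ (by omega)).trans (hpa i))
  refine ⟨⟨⟨he1, (hlevel e he1).mpr le_rfl⟩, fun E hE => (hlevel E hE.1).mp hE.2⟩, ?_⟩
  simp_rw [hroot, hdiv]

/-- For `f = ℓ₁^{a₁}⋯ℓ_n^{a_n}` a product of powers of linearly independent linear forms in
`k[x₁,…,x_d]` (`n ≤ d`, all `aᵢ > 0`) and `a = max aᵢ`, the level of `f` is
`e = ⌈log_p a⌉ + 1` and `I_e(f^(p^e - 1)) = (ℓ₁^{a₁-1}⋯ℓ_n^{a_n-1})`. -/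
theorem stmt_9 (p : ℕ) [Fact p.Prime] (k : Type*) [Field k] [CharP k p] [PerfectField k]
    (d n : ℕ) (hnd : n ≤ d)
    (ℓ : Fin n → MvPolynomial (Fin d) k)
    (hℓ : ∀ i, (ℓ i).IsHomogeneous 1)
    (hind : LinearIndependent k ℓ)
    (a : Fin n → ℕ) (ha : ∀ i, 0 < a i)
    (e : ℕ) (he : e = Nat.clog p (Finset.univ.sup a) + 1)
    (f : MvPolynomial (Fin d) k)
    (hf : f = ∏ i, ℓ i ^ a i) :
    HasLevel p f e ∧
    rootIdeal p e (f ^ (p ^ e - 1)) = Ideal.span {∏ i, ℓ i ^ (a i - 1)} :=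
  stmt_9_general p k d n ℓ hℓ hind a e he f hf
end

section
/- The polynomial f = xy³ + x³ ∈ F₂[x,y] has level 4. In particular, its level is strictly greater than ⌈log₂(‖f‖)⌉ + 1 = 3, where ‖f‖ = 3 is the maximum exponent of a variable occurring in a monomial of the support of f, and also strictly greater than ⌈log₂(deg f)⌉ + 1 = 3. -/
open MvPolynomial

/-!
Over `𝔽_p`, with `q = p ^ e`, every `g` decomposes uniquely as `g = ∑_{ν < q} g_ν ^ q * x ^ ν`, and
`I_e(g) = (g_ν)_ν`: the decomposition shows `g ∈ (g_ν)^[q]`, and conversely the coefficient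
extraction `g ↦ g_ν` is `q⁻¹`-linear, so it maps `J^[q]` into `J`.

For `f = x (x² + y³)` in characteristic `2` all binomial coefficients `binom(2^e - 1, k)` are odd,
so `f^(2^e - 1) = ∑_{k < 2^e} x^(3(2^e - 1) - 2k) y^(3k)`; since `3` is a unit mod `2^e` these
monomials have pairwise distinct residues mod `2^e`, which makes `I_e(f^(2^e - 1))` an explicit
monomial ideal. Likewise `f^(2^e - 2) = (f^(2^(e-1) - 1))^2` is a sum of distinct monomials, so it
lies in the Frobenius power of that ideal iff each of its monomials is divisible by the `2^e`-th
power of a generator: a finite check, which fails for `e = 1, 2, 3` and succeeds for `e = 4`.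
The two bounds follow from `‖f‖ ≤ deg f = 4`.
-/

section BracketPow

variable {R : Type*} [CommRing R]

theorem pow_mem_bracketPow (q : ℕ) {J : Ideal R} {a : R} (ha : a ∈ J) : a ^ q ∈ bracketPow q J :=
  Ideal.subset_span ⟨a, ha, rfl⟩

theorem bracketPow_span (p : ℕ) [ExpChar R p] (e : ℕ) (S : Set R) :
    bracketPow (p ^ e) (Ideal.span S) = Ideal.span ((· ^ p ^ e) '' S) := by
  change (Ideal.span S).map (iterateFrobenius R p e) = _
  rw [Ideal.map_span]
  rfl

theorem rootIdeal_le {p e : ℕ} {g : R} {J : Ideal R} (h : g ∈ bracketPow (p ^ e) J) :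
    rootIdeal p e g ≤ J :=
  sInf_le h

theorem le_rootIdeal {p e : ℕ} {g : R} {I : Ideal R} (h : ∀ J, g ∈ bracketPow (p ^ e) J → I ≤ J) :
    I ≤ rootIdeal p e g :=
  le_sInf h

end BracketPow

theorem add_pow_two_pow_sub_one {R : Type*} [CommSemiring R] [CharP R 2] (u v : R) (e : ℕ) :
    (u + v) ^ (2 ^ e - 1) = ∑ k ∈ Finset.range (2 ^ e), u ^ (2 ^ e - 1 - k) * v ^ k := by
  induction e with
  | zero => simp
  | succ e ih =>
    have hpos := Nat.one_le_two_pow (n := e)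
    rw [show 2 ^ (e + 1) - 1 = (2 ^ e - 1) + 2 ^ e by rw [pow_succ]; omega, pow_add, ih,
      add_pow_char_pow, mul_add, Finset.sum_mul, Finset.sum_mul, pow_succ, mul_two,
      Finset.sum_range_add]
    congr 1 <;> refine Finset.sum_congr rfl fun k hk => ?_ <;> rw [Finset.mem_range] at hk
    · rw [show 2 ^ e - 1 + 2 ^ e - k = 2 ^ e - 1 - k + 2 ^ e by omega, pow_add]; ring
    · rw [show 2 ^ e - 1 + 2 ^ e - (2 ^ e + k) = 2 ^ e - 1 - k by omega, pow_add]; ring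

namespace Finsupp

variable {σ : Type*} {q : ℕ} {ν : σ →₀ ℕ}

theorem smul_le_smul_add_iff (hν : ∀ i, ν i < q) {α n : σ →₀ ℕ} :
    q • α ≤ q • n + ν ↔ α ≤ n := by
  simp only [Finsupp.le_def, Finsupp.add_apply, Finsupp.smul_apply, smul_eq_mul]
  refine forall_congr' fun i => ?_
  have hq : 0 < q := (Nat.zero_le _).trans_lt (hν i)
  rw [mul_comm, ← Nat.le_div_iff_mul_le hq, Nat.mul_add_div hq, Nat.div_eq_of_lt (hν i), add_zero]

theorem smul_add_injective (q : ℕ) [NeZero q] (ν : σ →₀ ℕ) :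
    Function.Injective fun n : σ →₀ ℕ => q • n + ν :=
  (add_left_injective ν).comp (smul_right_injective _ (NeZero.ne q))

end Finsupp

namespace MvPolynomial

section MonomialIdeal

variable {σ R : Type*} [CommSemiring R]

theorem coeff_sum_monomial_one {ι : Type*} {s : Finset ι} {μ : ι → σ →₀ ℕ} (hμ : Set.InjOn μ s)
    {i : ι} (hi : i ∈ s) : coeff (μ i) (∑ j ∈ s, monomial (μ j) (1 : R)) = 1 := by
  classical
  rw [coeff_sum, Finset.sum_eq_single_of_mem i hi, coeff_monomial, if_pos rfl]
  intro j hj hji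
  rw [coeff_monomial, if_neg fun h => hji (hμ hj hi h)]

theorem sum_monomial_mem_span_monomial_iff [Nontrivial R] {ι : Type*} {s : Finset ι}
    {μ : ι → σ →₀ ℕ} (hμ : Set.InjOn μ s) {S : Set (σ →₀ ℕ)} :
    ∑ i ∈ s, monomial (μ i) (1 : R) ∈ Ideal.span ((fun m => monomial m 1) '' S) ↔
      ∀ i ∈ s, ∃ m ∈ S, m ≤ μ i := by
  classical
  rw [mem_ideal_span_monomial_image]
  constructor
  · intro h i hi
    exact h _ (mem_support_iff.2 (by rw [coeff_sum_monomial_one hμ hi]; exact one_ne_zero))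
  · intro h m hm
    obtain ⟨i, hi, rfl⟩ : ∃ i ∈ s, μ i = m := by
      by_contra! hne
      refine mem_support_iff.1 hm ?_
      rw [coeff_sum]
      exact Finset.sum_eq_zero fun j hj => by rw [coeff_monomial, if_neg (hne j hj)]
    exact h i hi

theorem sup_support_sup_le_totalDegree [Fintype σ] (g : MvPolynomial σ R) :
    (g.support.sup fun m => Finset.univ.sup ⇑m) ≤ g.totalDegree :=
  Finset.sup_le fun m hm => Finset.sup_le fun i _ =>
    (m.single_eval_le_sum rfl (fun _ => Nat.zero_le _) i).trans (le_totalDegree hm)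

end MonomialIdeal

section RootCoeff

variable {σ R : Type*} [CommSemiring R] {q : ℕ} [NeZero q] {ν : σ →₀ ℕ}

/-- `g_ν` in the decomposition `g = ∑_{ν < q} g_ν ^ q * x ^ ν` (see `rootCoeff_pow_mul`). -/
noncomputable def rootCoeff (q : ℕ) [NeZero q] (ν : σ →₀ ℕ) :
    MvPolynomial σ R →+ MvPolynomial σ R :=
  AddMonoidAlgebra.coeffAddEquiv.symm.toAddMonoidHom.comp <|
    (Finsupp.comapDomain.addMonoidHom (Finsupp.smul_add_injective q ν)).comp
      AddMonoidAlgebra.coeffAddEquiv.toAddMonoidHom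

@[simp]
theorem coeff_rootCoeff (g : MvPolynomial σ R) (n : σ →₀ ℕ) :
    coeff n (rootCoeff q ν g) = coeff (q • n + ν) g := rfl

theorem rootCoeff_monomial_smul_mul (hν : ∀ i, ν i < q) (α : σ →₀ ℕ) (c : R)
    (r : MvPolynomial σ R) :
    rootCoeff q ν (monomial (q • α) c * r) = monomial α c * rootCoeff q ν r := by
  ext n
  simp only [coeff_rootCoeff, coeff_monomial_mul', Finsupp.smul_le_smul_add_iff hν]
  split_ifs with h
  · obtain ⟨d, rfl⟩ := exists_add_of_le h
    rw [smul_add, add_assoc, add_tsub_cancel_left, add_tsub_cancel_left]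
  · rfl

theorem rootCoeff_monomial_self (c : R) : rootCoeff q ν (monomial ν c) = C c := by
  classical
  ext n
  simp [coeff_monomial, coeff_C, NeZero.ne q, eq_comm]

theorem rootCoeff_monomial_of_ne {μ : σ →₀ ℕ} (hμ : ∀ i, μ i < q) (hne : μ ≠ ν) (c : R) :
    rootCoeff q ν (monomial μ c) = 0 := by
  classical
  ext n
  rw [coeff_rootCoeff, coeff_monomial, if_neg, coeff_zero]
  rintro rfl
  have hn : n = 0 := by
    ext i
    have := hμ i
    simp only [Finsupp.add_apply, Finsupp.smul_apply, smul_eq_mul] at this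
    by_contra hi
    have := Nat.le_mul_of_pos_right q (Nat.pos_of_ne_zero hi)
    omega
  simp [hn] at hne

end RootCoeff

section ZModP

variable {σ : Type*} {p : ℕ} [Fact p.Prime] {e : ℕ}

theorem rootCoeff_pow_mul {ν : σ →₀ ℕ} (hν : ∀ i, ν i < p ^ e) (a r : MvPolynomial σ (ZMod p)) :
    rootCoeff (p ^ e) ν (a ^ p ^ e * r) = a * rootCoeff (p ^ e) ν r := by
  induction a using MvPolynomial.induction_on' with
  | monomial α c => rw [monomial_pow, ZMod.pow_card_pow, rootCoeff_monomial_smul_mul hν]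
  | add a b ha hb => rw [add_pow_char_pow, add_mul, map_add, ha, hb, add_mul]

theorem rootCoeff_mem_of_mem_bracketPow {ν : σ →₀ ℕ} (hν : ∀ i, ν i < p ^ e)
    {J : Ideal (MvPolynomial σ (ZMod p))} {g : MvPolynomial σ (ZMod p)}
    (hg : g ∈ bracketPow (p ^ e) J) : rootCoeff (p ^ e) ν g ∈ J := by
  suffices ∀ r, rootCoeff (p ^ e) ν (r * g) ∈ J by simpa using this 1
  induction hg using Submodule.span_induction with
  | mem x hx =>
    obtain ⟨a, ha, rfl⟩ := hx
    intro r
    rw [mul_comm, rootCoeff_pow_mul hν]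
    exact J.mul_mem_right _ ha
  | zero => simp
  | add x y _ _ hx hy => intro r; rw [mul_add, map_add]; exact J.add_mem (hx r) (hy r)
  | smul c x _ hx => intro r; rw [smul_eq_mul, ← mul_assoc]; exact hx (r * c)

theorem rootIdeal_sum_pow_mul_monomial {ι : Type*} {s : Finset ι}
    (a : ι → MvPolynomial σ (ZMod p)) {ν : ι → σ →₀ ℕ} (hν : Set.InjOn ν s)
    (hlt : ∀ i ∈ s, ∀ j, ν i j < p ^ e) :
    rootIdeal p e (∑ i ∈ s, a i ^ p ^ e * monomial (ν i) 1) = Ideal.span (a '' s) := by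
  refine le_antisymm (rootIdeal_le ?_) (le_rootIdeal fun J hJ => Ideal.span_le.2 ?_)
  · exact Ideal.sum_mem _ fun i hi =>
      Ideal.mul_mem_right _ _ (pow_mem_bracketPow _ (Ideal.subset_span ⟨i, hi, rfl⟩))
  rintro _ ⟨i, hi, rfl⟩
  have key := rootCoeff_mem_of_mem_bracketPow (hlt i hi) hJ
  rwa [map_sum, Finset.sum_eq_single_of_mem i hi, rootCoeff_pow_mul (hlt i hi),
    rootCoeff_monomial_self, C_1, mul_one] at key
  intro j hj hji
  rw [rootCoeff_pow_mul (hlt i hi),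
    rootCoeff_monomial_of_ne (hlt j hj) (fun h => hji (hν hj hi h)), mul_zero]

end ZModP

end MvPolynomial

local notation "𝔽₂[x,y]" => MvPolynomial (Fin 2) (ZMod 2)

local notation "𝔣" => (X 0 * X 1 ^ 3 + X 0 ^ 3 : 𝔽₂[x,y])

namespace XYCubeAddXCube

open Finsupp

noncomputable def monoXY (a b : ℕ) : 𝔽₂[x,y] := X 0 ^ a * X 1 ^ b

theorem monoXY_eq_monomial (a b : ℕ) : monoXY a b = monomial (single 0 a + single 1 b) 1 := by
  rw [monoXY, X_pow_eq_monomial, X_pow_eq_monomial, monomial_mul, one_mul]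

theorem monoXY_pow (a b n : ℕ) : monoXY a b ^ n = monoXY (n * a) (n * b) := by
  rw [monoXY, monoXY, mul_pow, ← pow_mul, ← pow_mul, mul_comm a, mul_comm b]

theorem monoXY_eq_pow_mul_monomial (q a b : ℕ) :
    monoXY a b = monoXY (a / q) (b / q) ^ q * monomial (single 0 (a % q) + single 1 (b % q)) 1 := by
  rw [monoXY_pow, ← monoXY_eq_monomial, monoXY, monoXY, monoXY]
  conv_lhs => rw [← Nat.div_add_mod a q, ← Nat.div_add_mod b q]
  ring

theorem single_add_single_le_iff {a b c d : ℕ} :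
    (single 0 c + single 1 d : Fin 2 →₀ ℕ) ≤ single 0 a + single 1 b ↔ c ≤ a ∧ d ≤ b := by
  simp [Finsupp.le_def, Fin.forall_fin_two]

theorem single_add_single_injective {a b c d : ℕ}
    (h : (single 0 a + single 1 b : Fin 2 →₀ ℕ) = single 0 c + single 1 d) : (a, b) = (c, d) := by
  have h0 := DFunLike.congr_fun h 0
  have h1 := DFunLike.congr_fun h 1
  simp only [Finsupp.coe_add, Pi.add_apply, single_eq_same, single_apply] at h0 h1
  simp_all

theorem sum_monoXY_mem_span_iff {ι κ : Type*} {s : Finset ι} {a b : ι → ℕ}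
    (hab : Set.InjOn (fun i => (a i, b i)) s) (t : Set κ) (c d : κ → ℕ) :
    ∑ i ∈ s, monoXY (a i) (b i) ∈ Ideal.span ((fun k => monoXY (c k) (d k)) '' t) ↔
      ∀ i ∈ s, ∃ k ∈ t, c k ≤ a i ∧ d k ≤ b i := by
  simp_rw [monoXY_eq_monomial]
  rw [← Set.image_image (fun m => monomial m (1 : ZMod 2)) (fun k => single 0 (c k) + single 1 (d k)),
    sum_monomial_mem_span_monomial_iff]
  · simp [single_add_single_le_iff]
  · exact fun i hi j hj h => hab hi hj (single_add_single_injective h)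

theorem pow_two_pow_sub_one (e : ℕ) :
    𝔣 ^ (2 ^ e - 1) = ∑ k ∈ Finset.range (2 ^ e), monoXY (3 * (2 ^ e - 1) - 2 * k) (3 * k) := by
  rw [show 𝔣 = X 0 * (X 0 ^ 2 + X 1 ^ 3) by ring, mul_pow, add_pow_two_pow_sub_one, Finset.mul_sum]
  refine Finset.sum_congr rfl fun k hk => ?_
  rw [Finset.mem_range] at hk
  rw [monoXY, ← pow_mul, ← pow_mul, ← mul_assoc, ← pow_add, mul_comm 3 k]
  congr 2
  omega

theorem pow_two_pow_sub_two (d : ℕ) :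
    𝔣 ^ (2 ^ (d + 1) - 2) =
      ∑ j ∈ Finset.range (2 ^ d), monoXY (2 * (3 * (2 ^ d - 1) - 2 * j)) (6 * j) := by
  rw [show 2 ^ (d + 1) - 2 = (2 ^ d - 1) * 2 by rw [pow_succ]; omega, pow_mul,
    pow_two_pow_sub_one, sum_pow_char]
  simp_rw [monoXY_pow, ← mul_assoc]
  rfl

theorem rootIdeal_pow_two_pow_sub_one (e : ℕ) :
    rootIdeal 2 e (𝔣 ^ (2 ^ e - 1)) = Ideal.span ((fun k =>
      monoXY ((3 * (2 ^ e - 1) - 2 * k) / 2 ^ e) (3 * k / 2 ^ e)) '' Finset.range (2 ^ e)) := by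
  rw [pow_two_pow_sub_one, Finset.sum_congr rfl fun k _ => monoXY_eq_pow_mul_monomial (2 ^ e) _ _]
  apply rootIdeal_sum_pow_mul_monomial
  · intro k hk l hl h
    have h3 : 3 * k ≡ 3 * l [MOD 2 ^ e] := (Prod.mk.inj (single_add_single_injective h)).2
    have hkl := Nat.ModEq.cancel_left_of_coprime (Nat.Coprime.pow_left e (by norm_num)) h3
    simpa [Nat.ModEq, Nat.mod_eq_of_lt (Finset.mem_range.1 hk),
      Nat.mod_eq_of_lt (Finset.mem_range.1 hl)] using hkl
  · intro k _ i
    fin_cases i <;> simp [Nat.mod_lt]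

/-- The `j`-th monomial of `𝔣 ^ (q - 2)` must be divisible by the `q`-th power of the `k`-th
generator of `I_{d+1}(𝔣 ^ (q - 1))`, where `q = 2 ^ (d + 1)`. -/
theorem pow_mem_bracketPow_rootIdeal_iff (d : ℕ) :
    𝔣 ^ (2 ^ (d + 1) - 2) ∈ bracketPow (2 ^ (d + 1)) (rootIdeal 2 (d + 1) (𝔣 ^ (2 ^ (d + 1) - 1))) ↔
      ∀ j < 2 ^ d, ∃ k < 2 ^ (d + 1),
        2 ^ (d + 1) * ((3 * (2 ^ (d + 1) - 1) - 2 * k) / 2 ^ (d + 1)) ≤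
          2 * (3 * (2 ^ d - 1) - 2 * j) ∧
        2 ^ (d + 1) * (3 * k / 2 ^ (d + 1)) ≤ 6 * j := by
  rw [rootIdeal_pow_two_pow_sub_one, bracketPow_span, Set.image_image, pow_two_pow_sub_two]
  simp_rw [monoXY_pow]
  rw [sum_monoXY_mem_span_iff]
  · simp
  · intro j _ l _ h
    simp only [Prod.mk.injEq] at h
    omega

theorem totalDegree_le_four : totalDegree 𝔣 ≤ 4 := by
  refine (totalDegree_add _ _).trans (max_le ((totalDegree_mul _ _).trans ?_) ?_)
  · rw [totalDegree_X, totalDegree_X_pow]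
  · rw [totalDegree_X_pow]; norm_num

end XYCubeAddXCube

/-- The polynomial `f = xy³ + x³ ∈ 𝔽₂[x,y]` has level `4`; in particular its level strictly
exceeds both `⌈log₂ ‖f‖⌉ + 1` and `⌈log₂ (deg f)⌉ + 1` (both of which equal `3`). -/
theorem stmt_19 (f : MvPolynomial (Fin 2) (ZMod 2))
    (hf : f = X 0 * (X 1) ^ 3 + (X 0) ^ 3) :
    HasLevel 2 f 4 ∧
    Nat.clog 2 (f.support.sup fun m => Finset.univ.sup ⇑m) + 1 < 4 ∧
    Nat.clog 2 f.totalDegree + 1 < 4 := by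
  subst hf
  have hclog {n : ℕ} (hn : n ≤ 4) : Nat.clog 2 n + 1 < 4 := by
    have := (Nat.clog_le_iff_le_pow (by norm_num : 1 < 2)).2 (hn.trans_eq (by norm_num : 4 = 2 ^ 2))
    omega
  refine ⟨⟨⟨by norm_num, (XYCubeAddXCube.pow_mem_bracketPow_rootIdeal_iff 3).2 (by decide)⟩, ?_⟩,
    hclog ((sup_support_sup_le_totalDegree _).trans XYCubeAddXCube.totalDegree_le_four),
    hclog XYCubeAddXCube.totalDegree_le_four⟩
  rintro e ⟨he, hmem⟩
  obtain ⟨d, rfl⟩ : ∃ d, e = d + 1 := ⟨e - 1, by omega⟩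
  have criterion := (XYCubeAddXCube.pow_mem_bracketPow_rootIdeal_iff d).1 hmem
  by_contra! hlt
  replace hlt : d < 3 := by omega
  interval_cases d <;> revert criterion <;> decide
end
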